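/- For n ∈ ℕ let h_n : [0,1] → [0,1] be the (Lebesgue-measure-preserving) map h_n(x) = 2ⁿ·x (mod 1), and let C_n be the completely dependent copula with Markov kernel K_{C_n}(x,E) = 1_E(h_n(x)). Then: (i) for every x ∈ [0,1], the Markov kernel of the transposed copula C_nᵗ at x is the discrete uniform distribution on the set {x/2ⁿ + i/2ⁿ : i ∈ {0,…,2ⁿ−1}}, and these measures converge weakly to Lebesgue measure λ on [0,1] as n → ∞; hence (C_nᵗ) converges weakly conditional to the independence copula Π; (ii) D₁(C_n, Π) = 1/3 for every n ∈ ℕ, so (C_n) does not converge weakly conditional (nor with respect to D₁) to Π. In particular, weak conditional convergence is not a symmetric concept. -/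

import Mathlib

open MeasureTheory Filter Set
open scoped ENNReal

noncomputable section

/-- `C` is a bivariate copula (all conditions imposed on the unit square `[0,1]²`). -/
def IsCopula (C : ℝ → ℝ → ℝ) : Prop :=
  (∀ x ∈ Set.Icc (0:ℝ) 1, C x 0 = 0 ∧ C 0 x = 0 ∧ C x 1 = x ∧ C 1 x = x) ∧
    ∀ x₁ ∈ Set.Icc (0:ℝ) 1, ∀ x₂ ∈ Set.Icc (0:ℝ) 1, ∀ y₁ ∈ Set.Icc (0:ℝ) 1,
      ∀ y₂ ∈ Set.Icc (0:ℝ) 1, x₁ ≤ x₂ → y₁ ≤ y₂ →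
        0 ≤ C x₂ y₂ - C x₂ y₁ - C x₁ y₂ + C x₁ y₁

/-- `K` (as conditional distribution function `(x,y) ↦ K(x,[0,y])`) is a Markov kernel of
the copula `C`, i.e. a regular conditional distribution of the second coordinate given the
first under `μ_C`: for each `x ∈ [0,1]`, `K x` is the distribution function of a
probability measure on `[0,1]`, `x ↦ K x y` is measurable, and the disintegration identity
`∫_{[0,a]} K(t,[0,y]) dλ(t) = μ_C([0,a] × [0,y]) = C(a,y)` holds. -/
structure IsMarkovKernelOf (C : ℝ → ℝ → ℝ) (K : ℝ → ℝ → ℝ) : Prop where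
  meas : ∀ y ∈ Set.Icc (0:ℝ) 1, Measurable fun x => K x y
  mono : ∀ x ∈ Set.Icc (0:ℝ) 1, MonotoneOn (K x) (Set.Icc (0:ℝ) 1)
  nonneg : ∀ x ∈ Set.Icc (0:ℝ) 1, ∀ y ∈ Set.Icc (0:ℝ) 1, 0 ≤ K x y
  apply_one : ∀ x ∈ Set.Icc (0:ℝ) 1, K x 1 = 1
  disint : ∀ a ∈ Set.Icc (0:ℝ) 1, ∀ y ∈ Set.Icc (0:ℝ) 1,
    ∫ t in Set.Icc (0:ℝ) a, K t y = C a y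

/-- Weak conditional convergence of a sequence of copulas, in terms of their conditional
distribution functions: for λ-a.e. `x ∈ [0,1]` the measures `K_{C_n}(x,·)` converge weakly
to `K_C(x,·)`, i.e. the conditional distribution functions converge at every continuity
point of `y ↦ K_C(x,[0,y])` in `[0,1]`. -/
def WeakCondConv (Kseq : ℕ → ℝ → ℝ → ℝ) (K : ℝ → ℝ → ℝ) : Prop :=
  ∀ᵐ x ∂(volume.restrict (Set.Icc (0:ℝ) 1)),
    ∀ y ∈ Set.Icc (0:ℝ) 1, ContinuousWithinAt (fun t => K x t) (Set.Icc 0 1) y →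
      Filter.Tendsto (fun n => Kseq n x y) Filter.atTop (nhds (K x y))

/-- Conditional distribution function of the independence copula `Π`. -/
def piKernel : ℝ → ℝ → ℝ := fun _ y => y

/-- The metric `D₁` between two copulas, expressed via their conditional distribution
functions `K₁, K₂` (with `Kᵢ x y = K_{Cᵢ}(x,[0,y])`). -/
noncomputable def D1 (K1 K2 : ℝ → ℝ → ℝ) : ℝ :=
  ∫ y in Set.Icc (0:ℝ) 1, ∫ x in Set.Icc (0:ℝ) 1, |K1 x y - K2 x y|

/-- The map `h_n(x) = 2ⁿ · x (mod 1)`. -/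
noncomputable def hmap (n : ℕ) (x : ℝ) : ℝ := Int.fract (2 ^ n * x)

/-- Conditional distribution function of the completely dependent copula `C_n` induced by
`h_n`: `K_{C_n}(x,[0,y]) = 1_{[0,y]}(h_n(x))`. -/
noncomputable def cdKernel (n : ℕ) (x y : ℝ) : ℝ := if hmap n x ≤ y then 1 else 0

/-- The completely dependent copula `C_n` induced by `h_n`:
`C_n(a,y) = λ({t ∈ [0,a] : h_n(t) ≤ y})`. -/
noncomputable def cdCopula (n : ℕ) (a y : ℝ) : ℝ :=
  (volume {t | t ∈ Set.Icc (0:ℝ) a ∧ hmap n t ≤ y}).toReal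

/-- The transposed copula `C_nᵗ(x,y) = C_n(y,x)`. -/
noncomputable def cdCopulaT (n : ℕ) (x y : ℝ) : ℝ := cdCopula n y x

/-- Conditional distribution function of the transposed copula `C_nᵗ`: at `x` it is the
distribution function of the discrete uniform distribution on
`{(x+i)/2ⁿ : i ∈ {0,…,2ⁿ−1}}`. -/
noncomputable def cdKernelT (n : ℕ) (x y : ℝ) : ℝ :=
  (∑ i ∈ Finset.range (2 ^ n), if (x + (i:ℝ)) / 2 ^ n ≤ y then (1:ℝ) else 0) / 2 ^ n

/-- The discrete uniform distribution on `{(x+i)/2ⁿ : i ∈ {0,…,2ⁿ−1}}`. -/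
noncomputable def cdMeasureT (n : ℕ) (x : ℝ) : Measure ℝ :=
  ((2:ℝ≥0∞) ^ n)⁻¹ • ∑ i ∈ Finset.range (2 ^ n), Measure.dirac ((x + (i:ℝ)) / 2 ^ n)

/-! On each dyadic interval `[i/2ⁿ, (i+1)/2ⁿ)` the map `h_n` is `t ↦ 2ⁿt - i`, so up to a
point `{h_n ≤ a} ∩ [0,y]` is the union of the intervals `[i/2ⁿ, (i+a)/2ⁿ] ∩ [0,y]`. Adding up
their lengths shows at once that `h_n` preserves `λ` and that the uniform distribution on the `2ⁿ` preimages
`(x+i)/2ⁿ` of `x` disintegrates `C_nᵗ`. Integrals against these uniform distributions are Riemann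
sums of mesh `2⁻ⁿ`, so they converge weakly to `λ`, and by the portmanteau theorem their
distribution functions converge to `y`. By contrast `K_{C_n}(x,·)` is always a Dirac mass, so
`|K_{C_n}(x,[0,y]) - y|` averages to `2y(1-y)` for every `n`, which gives `D₁(C_n, Π) = 1/3`. -/

open scoped Topology BoundedContinuousFunction

lemma Int.fract_le_sub_of_le {s : ℝ} {k : ℤ} (hk : (k : ℝ) ≤ s) : Int.fract s ≤ s - k := by
  rw [Int.fract, sub_le_sub_iff_left]
  exact_mod_cast Int.le_floor.2 hk

lemma Iic_inter_Icc_zero (a c : ℝ) : Iic c ∩ Icc 0 a = Icc 0 (min a c) := by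
  ext t
  simp only [mem_inter_iff, mem_Iic, mem_Icc, le_min_iff]
  tauto

lemma monotone_ite_le (s : ℝ) : Monotone fun y : ℝ => if s ≤ y then (1:ℝ) else 0 := by
  intro y₁ y₂ hy
  by_cases h : s ≤ y₁
  · simp [h, h.trans hy]
  · simp only [h, if_false]
    split_ifs <;> norm_num

lemma hmap_measurable (n : ℕ) : Measurable (hmap n) :=
  measurable_fract.comp (measurable_const_mul _)

section BranchPiece

variable (n : ℕ) {a y : ℝ}

def branchPiece (a y : ℝ) (i : ℕ) : Set ℝ := Icc (i / 2 ^ n) (min ((i + a) / 2 ^ n) y)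

lemma branchPiece_subset : ⋃ i ∈ Finset.range (2 ^ n), branchPiece n a y i ⊆
    {t | t ∈ Icc 0 y ∧ hmap n t ≤ a} := by
  simp only [iUnion_subset_iff]
  intro i _ t ⟨hit, hti⟩
  have h2 : (0:ℝ) < 2 ^ n := by positivity
  rw [div_le_iff₀' h2] at hit
  rw [le_min_iff, le_div_iff₀' h2] at hti
  refine ⟨⟨(div_nonneg i.cast_nonneg h2.le).trans (by rwa [div_le_iff₀' h2]), hti.2⟩, ?_⟩
  have := Int.fract_le_sub_of_le (s := 2 ^ n * t) (k := i) (by exact_mod_cast hit)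
  rw [hmap]
  push_cast at this
  linarith [hti.1]

lemma subset_branchPiece (hy : y ≤ 1) : {t | t ∈ Icc 0 y ∧ hmap n t ≤ a} ⊆
    (⋃ i ∈ Finset.range (2 ^ n), branchPiece n a y i) ∪ {y} := by
  rintro t ⟨⟨ht0, hty⟩, hta⟩
  rcases hty.eq_or_lt with rfl | hty
  · exact Or.inr rfl
  have h2 : (0:ℝ) < 2 ^ n := by positivity
  have hs : 0 ≤ 2 ^ n * t := by positivity
  have hfl : ((⌊2 ^ n * t⌋₊ : ℤ) : ℝ) = ⌊2 ^ n * t⌋ := by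
    rw [Int.natCast_floor_eq_floor hs]
  refine Or.inl (mem_biUnion (x := ⌊2 ^ n * t⌋₊) ?_ ⟨?_, le_min ?_ hty.le⟩)
  · rw [Finset.mem_coe, Finset.mem_range, Nat.floor_lt hs]
    exact_mod_cast (mul_lt_mul_of_pos_left (hty.trans_le hy) h2).trans_eq (mul_one _)
  · rw [div_le_iff₀' h2]; exact Nat.floor_le hs
  · rw [le_div_iff₀' h2]
    rw [hmap, Int.fract, ← hfl] at hta
    push_cast at hta
    linarith

lemma volume_branchPiece (i : ℕ) :
    volume (branchPiece n a y i) = ENNReal.ofReal (min a (2 ^ n * y - i)) / 2 ^ n := by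
  have h2 : (0:ℝ) < 2 ^ n := by positivity
  have : min ((i + a) / 2 ^ n) y - i / 2 ^ n = min a (2 ^ n * y - i) / 2 ^ n := by
    rw [← min_sub_sub_right, ← min_div_div_right h2.le]
    congr 1
    · ring
    · field_simp
  rw [branchPiece, Real.volume_Icc, this, ENNReal.ofReal_div_of_pos h2]
  norm_num

lemma aedisjoint_branchPiece (ha : a ≤ 1) {i j : ℕ} (hij : i < j) :
    AEDisjoint volume (branchPiece n a y i) (branchPiece n a y j) := by
  refine Set.Subsingleton.measure_zero (fun s hs t ht => ?_) volume
  have hj : (i:ℝ) + a ≤ j := by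
    have : (i:ℝ) + 1 ≤ j := by exact_mod_cast hij
    linarith
  have key : ∀ u ∈ branchPiece n a y i ∩ branchPiece n a y j, u = j / 2 ^ n := fun u hu =>
    le_antisymm ((hu.1.2.trans (min_le_left _ _)).trans (by gcongr)) hu.2.1
  rw [key s hs, key t ht]

theorem volume_mem_Icc_hmap_le (ha : a ≤ 1) (hy : y ≤ 1) :
    volume {t | t ∈ Icc 0 y ∧ hmap n t ≤ a} =
      ∑ i ∈ Finset.range (2 ^ n), ENNReal.ofReal (min a (2 ^ n * y - i)) / 2 ^ n := by
  have hU : volume (⋃ i ∈ Finset.range (2 ^ n), branchPiece n a y i) =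
      ∑ i ∈ Finset.range (2 ^ n), ENNReal.ofReal (min a (2 ^ n * y - i)) / 2 ^ n := by
    rw [measure_biUnion_finset₀ (f := branchPiece n a y) _
      (fun i _ => measurableSet_Icc.nullMeasurableSet)]
    · exact Finset.sum_congr rfl fun i _ => volume_branchPiece n i
    · intro i _ j _ hij
      rcases hij.lt_or_gt with h | h
      · exact aedisjoint_branchPiece n ha h
      · exact (aedisjoint_branchPiece n ha h).symm
  refine le_antisymm ?_ (hU ▸ measure_mono (branchPiece_subset n))
  calc _ ≤ volume ((⋃ i ∈ Finset.range (2 ^ n), branchPiece n a y i) ∪ {y}) :=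
        measure_mono (subset_branchPiece n hy)
    _ ≤ _ := (measure_union_le _ _).trans_eq (by rw [measure_singleton, add_zero, hU])

end BranchPiece

lemma volume_mem_unitInterval_hmap_le (n : ℕ) {y : ℝ} (hy : y ≤ 1) :
    volume {t | t ∈ Icc 0 1 ∧ hmap n t ≤ y} = ENNReal.ofReal y := by
  have hterm : ∀ i ∈ Finset.range (2 ^ n), min y (2 ^ n * 1 - i : ℝ) = y := fun i hi => by
    have : (i:ℝ) + 1 ≤ 2 ^ n := by exact_mod_cast Finset.mem_range.1 hi
    exact min_eq_left (by linarith)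
  rw [volume_mem_Icc_hmap_le n hy le_rfl, Finset.sum_congr rfl fun i hi => by rw [hterm i hi],
    Finset.sum_const, Finset.card_range, nsmul_eq_mul, Nat.cast_pow, Nat.cast_ofNat,
    ENNReal.mul_div_cancel]
  all_goals simp

theorem hmap_measurePreserving (n : ℕ) : MeasurePreserving (hmap n)
    (volume.restrict (Icc (0:ℝ) 1)) (volume.restrict (Icc (0:ℝ) 1)) := by
  refine ⟨hmap_measurable n, Measure.ext_of_Iic _ _ fun y => ?_⟩
  rw [Measure.map_apply (hmap_measurable n) measurableSet_Iic,
    Measure.restrict_apply (hmap_measurable n measurableSet_Iic),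
    Measure.restrict_apply measurableSet_Iic]
  rcases le_or_gt y 1 with hy | hy
  · rw [Iic_inter_Icc_zero, min_eq_right hy, Real.volume_Icc, sub_zero,
      ← volume_mem_unitInterval_hmap_le n hy, inter_comm]
    rfl
  · have hIcc : Icc (0:ℝ) 1 ⊆ Iic y := fun t ht => ht.2.trans hy.le
    rw [inter_eq_right.2 hIcc,
      (inter_eq_right (s := hmap n ⁻¹' Iic y)).2 fun t _ => (Int.fract_lt_one _).le.trans hy.le]

lemma cdKernel_eq_indicator (n : ℕ) (x y : ℝ) :
    cdKernel n x y = {t | hmap n t ≤ y}.indicator (fun _ => (1:ℝ)) x :=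
  rfl

theorem isMarkovKernelOf_cdCopula (n : ℕ) : IsMarkovKernelOf (cdCopula n) (cdKernel n) where
  meas y _ := Measurable.ite (measurableSet_le (hmap_measurable n) measurable_const)
    measurable_const measurable_const
  mono x _ := (monotone_ite_le _).monotoneOn _
  nonneg x _ y _ := by unfold cdKernel; split_ifs <;> norm_num
  apply_one x _ := if_pos (Int.fract_lt_one _).le
  disint a _ y _ := by
    have hmeas : MeasurableSet {t | hmap n t ≤ y} :=
      measurableSet_le (hmap_measurable n) measurable_const
    simp_rw [cdKernel_eq_indicator]
    rw [integral_indicator_const _ hmeas, measureReal_def, Measure.restrict_apply hmeas,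
      smul_eq_mul, mul_one, cdCopula, inter_comm]
    rfl

lemma cdKernelT_eq_sum_indicator (n : ℕ) (x y : ℝ) :
    cdKernelT n x y =
      ∑ i ∈ Finset.range (2 ^ n), (Iic (2 ^ n * y - i)).indicator (fun _ => ((2:ℝ) ^ n)⁻¹) x := by
  have h2 : (0:ℝ) < 2 ^ n := by positivity
  rw [cdKernelT, Finset.sum_div]
  refine Finset.sum_congr rfl fun i _ => ?_
  have hiff : (x + i) / 2 ^ n ≤ y ↔ x ∈ Iic (2 ^ n * y - i) := by
    rw [div_le_iff₀' h2, mem_Iic]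
    constructor <;> intro h <;> linarith
  by_cases h : (x + i) / 2 ^ n ≤ y
  · rw [if_pos h, indicator_of_mem (hiff.1 h), one_div]
  · rw [if_neg h, indicator_of_notMem (mt hiff.2 h), zero_div]

lemma integral_cdKernelT (n : ℕ) (a y : ℝ) :
    ∫ t in Icc 0 a, cdKernelT n t y =
      ∑ i ∈ Finset.range (2 ^ n), (ENNReal.ofReal (min a (2 ^ n * y - i))).toReal / 2 ^ n := by
  simp_rw [cdKernelT_eq_sum_indicator]
  rw [integral_finsetSum _ fun i _ => (integrable_const _).indicator measurableSet_Iic]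
  refine Finset.sum_congr rfl fun i _ => ?_
  rw [integral_indicator_const _ measurableSet_Iic, measureReal_def,
    Measure.restrict_apply measurableSet_Iic, Iic_inter_Icc_zero, Real.volume_Icc, sub_zero,
    smul_eq_mul, div_eq_mul_inv]

theorem isMarkovKernelOf_cdCopulaT (n : ℕ) : IsMarkovKernelOf (cdCopulaT n) (cdKernelT n) where
  meas y _ := by
    simp_rw [cdKernelT_eq_sum_indicator]
    exact Finset.measurable_sum _ fun i _ => measurable_const.indicator measurableSet_Iic
  mono x _ _ _ _ _ hy := div_le_div_of_nonneg_right
    (Finset.sum_le_sum fun i _ => monotone_ite_le _ hy) (by positivity)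
  nonneg x _ y _ := div_nonneg (Finset.sum_nonneg fun i _ => by split_ifs <;> norm_num)
    (by positivity)
  apply_one x hx := by
    have h2 : (0:ℝ) < 2 ^ n := by positivity
    have hterm : ∀ i ∈ Finset.range (2 ^ n), (x + i) / 2 ^ n ≤ 1 := fun i hi => by
      have : (i:ℝ) + 1 ≤ 2 ^ n := by exact_mod_cast Finset.mem_range.1 hi
      rw [div_le_one h2]
      linarith [hx.2]
    rw [cdKernelT, Finset.sum_congr rfl fun i hi => if_pos (hterm i hi), Finset.sum_const,
      Finset.card_range, nsmul_one, Nat.cast_pow, Nat.cast_ofNat, div_self h2.ne']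
  disint a ha y hy := by
    rw [integral_cdKernelT, cdCopulaT, cdCopula, volume_mem_Icc_hmap_le n ha.2 hy.2,
      ENNReal.toReal_sum fun i _ => by finiteness]
    refine Finset.sum_congr rfl fun i _ => ?_
    rw [ENNReal.toReal_div]
    norm_num

lemma cdMeasureT_Icc (n : ℕ) {x : ℝ} (hx : 0 ≤ x) (y : ℝ) :
    (cdMeasureT n x (Icc 0 y)).toReal = cdKernelT n x y := by
  have hdirac : ∀ i ∈ Finset.range (2 ^ n), Measure.dirac ((x + i) / 2 ^ n) (Icc 0 y) =
      ENNReal.ofReal (if (x + i) / 2 ^ n ≤ y then 1 else 0) := fun i _ => by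
    rw [Measure.dirac_apply' _ measurableSet_Icc]
    by_cases h : (x + i) / 2 ^ n ≤ y
    · rw [if_pos h, indicator_of_mem (mem_Icc.2 ⟨by positivity, h⟩)]
      simp
    · rw [if_neg h, indicator_of_notMem fun hm => h hm.2]
      simp
  rw [cdMeasureT, Measure.smul_apply, Measure.coe_finsetSum, Finset.sum_apply,
    Finset.sum_congr rfl hdirac, ← ENNReal.ofReal_sum_of_nonneg fun i _ => by positivity,
    smul_eq_mul, ENNReal.toReal_mul, ENNReal.toReal_ofReal (by positivity), cdKernelT,
    div_eq_inv_mul]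
  norm_num

instance (n : ℕ) (x : ℝ) : IsProbabilityMeasure (cdMeasureT n x) := by
  constructor
  simp only [cdMeasureT, Measure.smul_apply, Measure.coe_finsetSum, Finset.sum_apply,
    measure_univ, Finset.sum_const, Finset.card_range, nsmul_one, smul_eq_mul, Nat.cast_pow,
    Nat.cast_ofNat]
  exact ENNReal.inv_mul_cancel (by simp) (by simp)

lemma integral_cdMeasureT (n : ℕ) (x : ℝ) (f : ℝ →ᵇ ℝ) :
    ∫ t, f t ∂cdMeasureT n x = (∑ i ∈ Finset.range (2 ^ n), f ((x + i) / 2 ^ n)) / 2 ^ n := by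
  rw [cdMeasureT, integral_smul_measure, integral_finsetSum_measure fun i _ => f.integrable _]
  simp_rw [integral_dirac]
  rw [smul_eq_mul, div_eq_inv_mul]
  norm_num

lemma abs_mul_sub_intervalIntegral_le {f : ℝ → ℝ} {p q c ε : ℝ} (hpq : p ≤ q)
    (hf : IntervalIntegrable f volume p q) (h : ∀ t ∈ Icc p q, |f c - f t| ≤ ε) :
    |(q - p) * f c - ∫ t in p..q, f t| ≤ ε * (q - p) := by
  have hconst : (q - p) * f c = ∫ _ in p..q, f c := by
    rw [intervalIntegral.integral_const, smul_eq_mul]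
  rw [hconst, ← intervalIntegral.integral_sub intervalIntegrable_const hf, ← abs_of_nonneg
    (sub_nonneg.2 hpq)]
  refine intervalIntegral.norm_integral_le_of_norm_le_const fun t ht =>
    (Real.norm_eq_abs _).trans_le (h t ?_)
  rw [uIoc_of_le hpq] at ht
  exact Ioc_subset_Icc_self ht

theorem tendsto_riemannSum_unitInterval {f : ℝ → ℝ} (hf : ContinuousOn f (Icc 0 1))
    {τ : ℕ → ℕ → ℝ} (hτ : ∀ N i : ℕ, i < N → τ N i ∈ Icc ((i:ℝ) / N) ((i + 1) / N)) :
    Tendsto (fun N : ℕ => (∑ i ∈ Finset.range N, f (τ N i)) / N) atTop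
      (𝓝 (∫ t in (0:ℝ)..1, f t)) := by
  rw [Metric.tendsto_atTop]
  intro ε hε
  obtain ⟨δ, hδ, hfδ⟩ := Metric.uniformContinuousOn_iff.1
    (isCompact_Icc.uniformContinuousOn_of_continuous hf) (ε / 2) (half_pos hε)
  obtain ⟨M, hM⟩ := exists_nat_one_div_lt hδ
  refine ⟨M + 1, fun N hN => ?_⟩
  have hN0 : (0:ℝ) < N := by exact_mod_cast (M.succ_pos.trans_le hN)
  have hmesh : 1 / (N:ℝ) < δ :=
    lt_of_le_of_lt (one_div_le_one_div_of_le (by positivity) (by exact_mod_cast hN)) hM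
  set a : ℕ → ℝ := fun k => k / N with ha_def
  have hstep : ∀ i, a (i + 1) - a i = 1 / N := fun i => by
    simp only [ha_def]; push_cast; ring
  have hle : ∀ i, a i ≤ a (i + 1) := fun i => by
    linarith [hstep i, one_div_pos.2 hN0]
  have hpiece : ∀ i < N, Icc (a i) (a (i + 1)) ⊆ Icc 0 1 := fun i hi t ht =>
    ⟨(by positivity : (0:ℝ) ≤ a i).trans ht.1, ht.2.trans <| by
      simp only [ha_def]; rw [div_le_one hN0]; exact_mod_cast hi⟩
  have hint : ∀ i < N, IntervalIntegrable f volume (a i) (a (i + 1)) := fun i hi =>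
    (hf.mono (hpiece i hi)).intervalIntegrable_of_Icc (hle i)
  have hsplit : ∫ t in (0:ℝ)..1, f t = ∑ i ∈ Finset.range N, ∫ t in a i..a (i + 1), f t := by
    rw [intervalIntegral.sum_integral_adjacent_intervals hint]
    simp [ha_def, hN0.ne']
  have herr : ∀ i ∈ Finset.range N, |(a (i + 1) - a i) * f (τ N i) -
      ∫ t in a i..a (i + 1), f t| ≤ ε / 2 * (a (i + 1) - a i) := fun i hi => by
    have hi := Finset.mem_range.1 hi
    refine abs_mul_sub_intervalIntegral_le (hle i) (hint i hi) fun t ht => ?_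
    have hτi : τ N i ∈ Icc (a i) (a (i + 1)) := by simpa [ha_def] using hτ N i hi
    refine (hfδ _ (hpiece i hi hτi) _ (hpiece i hi ht) ?_).le
    rw [Real.dist_eq, abs_sub_lt_iff]
    constructor <;> linarith [hstep i, hτi.1, hτi.2, ht.1, ht.2]
  calc dist ((∑ i ∈ Finset.range N, f (τ N i)) / N) (∫ t in (0:ℝ)..1, f t)
      = |∑ i ∈ Finset.range N, ((a (i + 1) - a i) * f (τ N i) -
          ∫ t in a i..a (i + 1), f t)| := by
        rw [hsplit, Real.dist_eq, Finset.sum_sub_distrib, Finset.sum_div]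
        simp_rw [hstep, one_div_mul_eq_div]
    _ ≤ ∑ i ∈ Finset.range N, ε / 2 * (a (i + 1) - a i) :=
        (Finset.abs_sum_le_sum_abs _ _).trans (Finset.sum_le_sum herr)
    _ = ε / 2 := by
        rw [← Finset.mul_sum, Finset.sum_range_sub (f := a)]
        simp [ha_def, hN0.ne']
    _ < ε := half_lt_self hε

theorem tendsto_integral_cdMeasureT {x : ℝ} (hx : x ∈ Icc 0 1) (f : ℝ →ᵇ ℝ) :
    Tendsto (fun n => ∫ t, f t ∂cdMeasureT n x) atTop (𝓝 (∫ t in Icc 0 1, f t)) := by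
  have hτ : ∀ N i : ℕ, i < N → (x + i) / N ∈ Icc ((i:ℝ) / N) ((i + 1) / N) := fun N i _ =>
    ⟨div_le_div_of_nonneg_right (by linarith [hx.1]) N.cast_nonneg,
      div_le_div_of_nonneg_right (by linarith [hx.2]) N.cast_nonneg⟩
  have hriemann := (tendsto_riemannSum_unitInterval f.continuous.continuousOn hτ).comp
    (tendsto_pow_atTop_atTop_of_one_lt one_lt_two)
  rw [integral_Icc_eq_integral_Ioc, ← intervalIntegral.integral_of_le zero_le_one]
  simp_rw [integral_cdMeasureT]
  convert hriemann using 2 with n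
  simp

lemma tendsto_measure_Icc_of_tendsto_integral {ι : Type*} {L : Filter ι} {μs : ι → Measure ℝ}
    [∀ i, IsProbabilityMeasure (μs i)]
    (h : ∀ f : ℝ →ᵇ ℝ, Tendsto (fun i => ∫ t, f t ∂μs i) L (𝓝 (∫ t in Icc 0 1, f t)))
    {y : ℝ} (hy : y ∈ Icc 0 1) : Tendsto (fun i => (μs i (Icc 0 y)).toReal) L (𝓝 y) := by
  have : IsProbabilityMeasure (volume.restrict (Icc (0:ℝ) 1)) := ⟨by simp⟩
  let μ : ProbabilityMeasure ℝ := ⟨volume.restrict (Icc 0 1), inferInstance⟩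
  let ν : ι → ProbabilityMeasure ℝ := fun i => ⟨μs i, inferInstance⟩
  have hconv : Tendsto ν L (𝓝 μ) :=
    ProbabilityMeasure.tendsto_iff_forall_integral_tendsto.2 h
  have hfrontier : (μ : Measure ℝ) (frontier (Icc 0 y)) = 0 := by
    rw [frontier_Icc hy.1]
    exact (toFinite _).measure_zero (volume.restrict (Icc 0 1))
  have hμ : (μ : Measure ℝ) (Icc 0 y) = ENNReal.ofReal y := by
    simp [μ, Measure.restrict_apply measurableSet_Icc, Icc_inter_Icc, hy.2]
  have hlim := ProbabilityMeasure.tendsto_measure_of_null_frontier_of_tendsto' hconv hfrontier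
  rw [hμ] at hlim
  have hlim' := (ENNReal.tendsto_toReal ENNReal.ofReal_ne_top).comp hlim
  rwa [ENNReal.toReal_ofReal hy.1] at hlim'

theorem weakCondConv_cdKernelT : WeakCondConv cdKernelT piKernel := by
  refine ae_restrict_of_forall_mem measurableSet_Icc fun x hx y hy _ => ?_
  simp_rw [piKernel, ← cdMeasureT_Icc _ hx.1]
  exact tendsto_measure_Icc_of_tendsto_integral (tendsto_integral_cdMeasureT hx) hy

theorem not_weakCondConv_cdKernel : ¬ WeakCondConv cdKernel piKernel := by
  intro h
  have : (ae (volume.restrict (Icc (0:ℝ) 1))).NeBot := ae_restrict_neBot.2 (by simp)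
  obtain ⟨x, hx⟩ := h.exists
  have hlim := hx (1 / 2) ⟨by norm_num, by norm_num⟩ continuousWithinAt_id
  have hvals : ∀ n, cdKernel n x (1 / 2) ∈ ({0, 1} : Set ℝ) := fun n => by
    unfold cdKernel; split_ifs <;> simp
  have := (toFinite ({0, 1} : Set ℝ)).isClosed.mem_of_tendsto hlim (Eventually.of_forall hvals)
  norm_num [piKernel] at this

lemma integral_abs_cdKernel_sub (n : ℕ) {y : ℝ} (hy : y ∈ Icc 0 1) :
    ∫ x in Icc 0 1, |cdKernel n x y - y| = 2 * y - 2 * y ^ 2 := by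
  set S := {x | hmap n x ≤ y}
  have hS : MeasurableSet S := measurableSet_le (hmap_measurable n) measurable_const
  have hpt : ∀ x, |cdKernel n x y - y| = y + S.indicator (fun _ => 1 - 2 * y) x := fun x => by
    by_cases hx : x ∈ S
    · rw [cdKernel_eq_indicator, indicator_of_mem hx, indicator_of_mem hx,
        abs_of_nonneg (by linarith [hy.2])]
      ring
    · rw [cdKernel_eq_indicator, indicator_of_notMem hx, indicator_of_notMem hx, zero_sub,
        abs_neg, abs_of_nonneg hy.1, add_zero]
  simp_rw [hpt]
  rw [integral_add (integrable_const _) ((integrable_const _).indicator hS), setIntegral_const,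
    integral_indicator_const _ hS, measureReal_def, measureReal_def,
    Measure.restrict_apply hS, inter_comm, Real.volume_Icc,
    show Icc 0 1 ∩ S = {t | t ∈ Icc 0 1 ∧ hmap n t ≤ y} from rfl,
    volume_mem_unitInterval_hmap_le n hy.2]
  simp only [sub_zero, ENNReal.ofReal_one, ENNReal.toReal_one, ENNReal.toReal_ofReal hy.1,
    smul_eq_mul]
  ring

theorem D1_cdKernel_piKernel (n : ℕ) : D1 (cdKernel n) piKernel = 1 / 3 := by
  simp only [D1, piKernel]
  rw [setIntegral_congr_fun measurableSet_Icc fun y hy => integral_abs_cdKernel_sub n hy,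
    integral_Icc_eq_integral_Ioc, ← intervalIntegral.integral_of_le zero_le_one,
    intervalIntegral.integral_sub, intervalIntegral.integral_const_mul,
    intervalIntegral.integral_const_mul, integral_id, integral_pow]
  · norm_num
  all_goals exact (by fun_prop : Continuous _).intervalIntegrable _ _

/-- With `h_n(x) = 2ⁿx (mod 1)`, `C_n` the completely dependent copula
with kernel `K_{C_n}(x,[0,y]) = 1_{[0,y]}(h_n(x))`:
(i) `h_n` preserves Lebesgue measure on `[0,1]`; the Markov kernel of the transposed
copula `C_nᵗ` at `x` is the discrete uniform distribution on
`{x/2ⁿ + i/2ⁿ : i ∈ {0,…,2ⁿ−1}}`, these converge weakly to Lebesgue measure on `[0,1]`,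
and hence `(C_nᵗ)` converges weakly conditional to `Π`;
(ii) `D₁(C_n, Π) = 1/3` for every `n`, and `(C_n)` converges to `Π` neither weakly
conditional nor w.r.t. `D₁`; in particular weak conditional convergence is not a
symmetric concept. -/
theorem stmt18 :
    (∀ n, MeasurePreserving (hmap n)
      (volume.restrict (Set.Icc (0:ℝ) 1)) (volume.restrict (Set.Icc (0:ℝ) 1))) ∧
    (∀ n, IsMarkovKernelOf (cdCopula n) (cdKernel n)) ∧
    (∀ n, IsMarkovKernelOf (cdCopulaT n) (cdKernelT n)) ∧
    (∀ n, ∀ x ∈ Set.Icc (0:ℝ) 1, ∀ y ∈ Set.Icc (0:ℝ) 1,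
      (cdMeasureT n x (Set.Icc (0:ℝ) y)).toReal = cdKernelT n x y) ∧
    (∀ x ∈ Set.Icc (0:ℝ) 1, ∀ f : BoundedContinuousFunction ℝ ℝ,
      Filter.Tendsto (fun n => ∫ t, f t ∂(cdMeasureT n x)) Filter.atTop
        (nhds (∫ t in Set.Icc (0:ℝ) 1, f t))) ∧
    WeakCondConv cdKernelT piKernel ∧
    (∀ n, D1 (cdKernel n) piKernel = 1 / 3) ∧
    ¬ WeakCondConv cdKernel piKernel ∧
    ¬ Filter.Tendsto (fun n => D1 (cdKernel n) piKernel) Filter.atTop (nhds 0) := by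
  refine ⟨hmap_measurePreserving, isMarkovKernelOf_cdCopula, isMarkovKernelOf_cdCopulaT,
    fun n x hx y _ => cdMeasureT_Icc n hx.1 y, fun x hx => tendsto_integral_cdMeasureT hx,
    weakCondConv_cdKernelT, D1_cdKernel_piKernel, not_weakCondConv_cdKernel, fun h => ?_⟩
  simp_rw [D1_cdKernel_piKernel] at h
  norm_num at h
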